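/- Let G, H have commuting actions on X, and γ: H × X → K^× satisfy condition (4). Then the function δ: H × H → K^× defined (for nonempty X, picking any x₀ ∈ X) by δ(θ,η) = γ(θ, η·x₀)·γ(θη, x₀)⁻¹·γ(η, x₀) is a 2-cocycle on H: δ(θ₁,θ₂)·δ(θ₁θ₂,θ₃) = δ(θ₁,θ₂θ₃)·δ(θ₂,θ₃) for all θ₁,θ₂,θ₃ ∈ H. -/

import Mathlib

/-! Condition (4) says exactly that the expression
`γ(θ, η·x) γ(θη, x)⁻¹ γ(η, x)` does not depend on `x`. Evaluating `δ(θ₁, θ₂)` at the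
base point `θ₃·x₀` instead of `x₀`, both sides of the cocycle identity become
`γ(θ₁, θ₂θ₃·x₀) γ(θ₂, θ₃·x₀) γ(θ₁θ₂θ₃, x₀)⁻¹ γ(θ₃, x₀)` after cancellation in the
commutative group `Kˣ`. -/

section BasedCocycle

variable {H X M : Type*} [Group H] [CommGroup M] (actL : H → X → X) (γ : H → X → M)

def basedCocycle (x : X) (θ η : H) : M :=
  γ θ (actL η x) * (γ (θ * η) x)⁻¹ * γ η x

theorem basedCocycle_eq_basedCocycle
    (h4 : ∀ (x y : X) (η θ : H),
      γ θ (actL η y) * (γ (θ * η) y)⁻¹ * γ η y *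
        (γ θ (actL η x))⁻¹ * γ (θ * η) x * (γ η x)⁻¹ = 1)
    (x y : X) (θ η : H) :
    basedCocycle actL γ x θ η = basedCocycle actL γ y θ η := by
  symm
  apply mul_inv_eq_one.mp
  rw [← h4 x y η θ]
  simp only [basedCocycle, mul_inv, inv_inv, mul_assoc]

theorem basedCocycle_translate_mul_basedCocycle
    (actL_mul : ∀ (η θ : H) x, actL (η * θ) x = actL η (actL θ x))
    (x : X) (θ₁ θ₂ θ₃ : H) :
    basedCocycle actL γ (actL θ₃ x) θ₁ θ₂ * basedCocycle actL γ x (θ₁ * θ₂) θ₃ =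
      basedCocycle actL γ x θ₁ (θ₂ * θ₃) * basedCocycle actL γ x θ₂ θ₃ := by
  simp only [basedCocycle, actL_mul, mul_assoc]
  rw [mul_left_comm (γ θ₂ _) (γ (θ₁ * θ₂) _), inv_mul_cancel_left,
    mul_left_comm (γ θ₂ _) (γ (θ₂ * θ₃) x)⁻¹, mul_inv_cancel_left, mul_left_comm (γ θ₂ _)]

end BasedCocycle

theorem stmt14_general {H X : Type*} [Group H] {K : Type*} [Field K]
    (actL : H → X → X)
    (actL_mul : ∀ (η θ : H) x, actL (η * θ) x = actL η (actL θ x))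
    (γ : H → X → Kˣ)
    (h4 : ∀ (x y : X) (η θ : H),
      γ θ (actL η y) * (γ (θ * η) y)⁻¹ * γ η y *
        (γ θ (actL η x))⁻¹ * γ (θ * η) x * (γ η x)⁻¹ = 1)
    (x₀ : X)
    (δ : H → H → Kˣ)
    (hδ : ∀ θ η, δ θ η = γ θ (actL η x₀) * (γ (θ * η) x₀)⁻¹ * γ η x₀) :
    ∀ θ₁ θ₂ θ₃ : H, δ θ₁ θ₂ * δ (θ₁ * θ₂) θ₃ = δ θ₁ (θ₂ * θ₃) * δ θ₂ θ₃ := by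
  obtain rfl : δ = basedCocycle actL γ x₀ := funext₂ hδ
  intro θ₁ θ₂ θ₃
  rw [basedCocycle_eq_basedCocycle actL γ h4 x₀ (actL θ₃ x₀),
    basedCocycle_translate_mul_basedCocycle actL γ actL_mul]

/-- δ defined from γ via a basepoint is a 2-cocycle on H. -/
theorem stmt14 {G H X : Type*} [Group G] [Group H] {K : Type*} [Field K]
    (actR : X → G → X) (actL : H → X → X)
    (actL_mul : ∀ (η θ : H) x, actL (η * θ) x = actL η (actL θ x))
    (actL_one : ∀ x, actL 1 x = x)
    (comm : ∀ (η : H) x (g : G), actL η (actR x g) = actR (actL η x) g)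
    (γ : H → X → Kˣ)
    (h4 : ∀ (x y : X) (η θ : H),
      γ θ (actL η y) * (γ (θ * η) y)⁻¹ * γ η y *
        (γ θ (actL η x))⁻¹ * γ (θ * η) x * (γ η x)⁻¹ = 1)
    (x₀ : X)
    (δ : H → H → Kˣ)
    (hδ : ∀ θ η, δ θ η = γ θ (actL η x₀) * (γ (θ * η) x₀)⁻¹ * γ η x₀) :
    ∀ θ₁ θ₂ θ₃ : H, δ θ₁ θ₂ * δ (θ₁ * θ₂) θ₃ = δ θ₁ (θ₂ * θ₃) * δ θ₂ θ₃ :=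
  stmt14_general actL actL_mul γ h4 x₀ δ hδ
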